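/- Let R be a left diring. Then R is 3-semi-primitive if and only if there exists a faithful completely 3-reducible left R-module, if and only if R is a subdirect product of 3-primitive left dirings. -/

import Mathlib

universe u v

/-- A left diring: an additive abelian group with a dimonoid structure
(left product `ldL` = ⇀·, right product `ldR` = ↼·) having a left bar-unit `ldE`,
with both products distributing over addition on both sides. -/
class LeftDiring (R : Type u) extends AddCommGroup R where
  ldL : R → R → R
  ldR : R → R → R
  ldE : R
  ax1 : ∀ x y z : R, ldL x (ldL y z) = ldL (ldL x y) z
  ax2 : ∀ x y z : R, ldL (ldL x y) z = ldL x (ldR y z)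
  ax3 : ∀ x y z : R, ldL (ldR x y) z = ldR x (ldL y z)
  ax4 : ∀ x y z : R, ldR (ldL x y) z = ldR x (ldR y z)
  ax5 : ∀ x y z : R, ldR x (ldR y z) = ldR (ldR x y) z
  ax6 : ∀ x : R, ldR ldE x = x
  dist1 : ∀ x y z : R, ldL x (y + z) = ldL x y + ldL x z
  dist2 : ∀ x y z : R, ldL (x + y) z = ldL x z + ldL y z
  dist3 : ∀ x y z : R, ldR x (y + z) = ldR x y + ldR x z
  dist4 : ∀ x y z : R, ldR (x + y) z = ldR x z + ldR y z

open LeftDiring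

/-- A left module over a left diring `R`: an abelian group `M` with two actions
`la` = ⇀⊙ and `ra` = ↼⊙ satisfying the module axioms. -/
structure DiModule (R : Type u) [LeftDiring R] (M : Type v) [AddCommGroup M] where
  la : R → M → M
  ra : R → M → M
  la_add : ∀ (a : R) (x y : M), la a (x + y) = la a x + la a y
  add_la : ∀ (a b : R) (x : M), la (a + b) x = la a x + la b x
  ra_add : ∀ (a : R) (x y : M), ra a (x + y) = ra a x + ra a y
  add_ra : ∀ (a b : R) (x : M), ra (a + b) x = ra a x + ra b x
  m1 : ∀ (a b : R) (x : M), la (ldL a b) x = la a (la b x)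
  m2 : ∀ (a b : R) (x : M), la (ldL a b) x = la a (ra b x)
  m3 : ∀ (a b : R) (x : M), la (ldR a b) x = ra a (la b x)
  m4 : ∀ (a b : R) (x : M), ra (ldL a b) x = ra a (ra b x)
  m5 : ∀ (a b : R) (x : M), ra (ldR a b) x = ra a (ra b x)
  m6 : ∀ x : M, ra ldE x = x
def IsSubmodule {R : Type} [LeftDiring R] {M : Type} [AddCommGroup M]
    (mm : DiModule R M) (N : AddSubgroup M) : Prop :=
  ∀ a : R, ∀ x ∈ N, mm.la a x ∈ N ∧ mm.ra a x ∈ N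

def halo {R : Type} [LeftDiring R] {M : Type} [AddCommGroup M]
    (mm : DiModule R M) : Set M :=
  {x : M | mm.la ldE x = 0}

/-- 3-irreducibility: the halo is the unique proper submodule between `0` and `M`. -/
def Irr3 {R : Type} [LeftDiring R] {M : Type} [AddCommGroup M]
    (mm : DiModule R M) : Prop :=
  halo mm ≠ {0} ∧ halo mm ≠ Set.univ ∧
  ∀ N : AddSubgroup M, IsSubmodule mm N →
    (N : Set M) ≠ {0} → (N : Set M) ≠ Set.univ → (N : Set M) = halo mm

/-- `a` annihilates `M`. -/
def MemAnn {R : Type} [LeftDiring R] {M : Type} [AddCommGroup M]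
    (mm : DiModule R M) (a : R) : Prop :=
  ∀ x : M, mm.la a x = 0 ∧ mm.ra a x = 0

/-- `M` is a faithful module. -/
def FaithfulAnn {R : Type} [LeftDiring R] {M : Type} [AddCommGroup M]
    (mm : DiModule R M) : Prop :=
  ∀ a : R, MemAnn mm a → a = 0

/-- The module structure induced on a submodule. -/
def DiModule.restrict {R : Type} [LeftDiring R] {M : Type} [AddCommGroup M]
    (mm : DiModule R M) (N : AddSubgroup M) (h : IsSubmodule mm N) :
    DiModule R N where
  la a x := ⟨mm.la a x, (h a x x.2).1⟩
  ra a x := ⟨mm.ra a x, (h a x x.2).2⟩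
  la_add a x y := Subtype.ext (mm.la_add a x y)
  add_la a b x := Subtype.ext (mm.add_la a b x)
  ra_add a x y := Subtype.ext (mm.ra_add a x y)
  add_ra a b x := Subtype.ext (mm.add_ra a b x)
  m1 a b x := Subtype.ext (mm.m1 a b x)
  m2 a b x := Subtype.ext (mm.m2 a b x)
  m3 a b x := Subtype.ext (mm.m3 a b x)
  m4 a b x := Subtype.ext (mm.m4 a b x)
  m5 a b x := Subtype.ext (mm.m5 a b x)
  m6 x := Subtype.ext (mm.m6 x)

open scoped Classical in
/-- `M` is completely 3-reducible: it is an (internal) direct sum of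
3-irreducible submodules. -/
def CompRed3 {R : Type} [LeftDiring R] {M : Type} [AddCommGroup M]
    (mm : DiModule R M) : Prop :=
  ∃ (ι : Type) (N : ι → AddSubgroup M) (h : ∀ i, IsSubmodule mm (N i)),
    DirectSum.IsInternal N ∧ ∀ i, Irr3 (mm.restrict (N i) (h i))

/-- A 3-primitive left diring: one admitting a faithful 3-irreducible left module. -/
def Prim3 (R : Type) [LeftDiring R] : Prop :=
  ∃ (M : Type) (g : AddCommGroup M) (mm : @DiModule R _ M g),
    @Irr3 R _ M g mm ∧ @FaithfulAnn R _ M g mm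

/-- A 3-semi-primitive left diring. -/
def SemiPrim3 (R : Type) [LeftDiring R] : Prop :=
  ∀ a : R, a ≠ 0 →
    ∃ (M : Type) (g : AddCommGroup M) (mm : @DiModule R _ M g),
      @Irr3 R _ M g mm ∧ ¬ @MemAnn R _ M g mm a

/-- The direct product of a family of left dirings. -/
instance piLeftDiring {ι : Type} (S : ι → Type) [∀ i, LeftDiring (S i)] :
    LeftDiring (∀ i, S i) where
  ldL f g := fun i => ldL (f i) (g i)
  ldR f g := fun i => ldR (f i) (g i)
  ldE := fun _ => ldE
  ax1 x y z := funext fun i => ax1 (x i) (y i) (z i)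
  ax2 x y z := funext fun i => ax2 (x i) (y i) (z i)
  ax3 x y z := funext fun i => ax3 (x i) (y i) (z i)
  ax4 x y z := funext fun i => ax4 (x i) (y i) (z i)
  ax5 x y z := funext fun i => ax5 (x i) (y i) (z i)
  ax6 x := funext fun i => ax6 (x i)
  dist1 x y z := funext fun i => dist1 (x i) (y i) (z i)
  dist2 x y z := funext fun i => dist2 (x i) (y i) (z i)
  dist3 x y z := funext fun i => dist3 (x i) (y i) (z i)
  dist4 x y z := funext fun i => dist4 (x i) (y i) (z i)

/-- A left diring homomorphism: additive, multiplicative for both products, and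
mapping some left bar-unit of the source to a left bar-unit of the target. -/
def IsDiringHom {R S : Type} [LeftDiring R] [LeftDiring S] (φ : R → S) : Prop :=
  (∀ a b : R, φ (a + b) = φ a + φ b) ∧
  (∀ a b : R, φ (ldL a b) = ldL (φ a) (φ b)) ∧
  (∀ a b : R, φ (ldR a b) = ldR (φ a) (φ b)) ∧
  ∃ u : R, (∀ x : R, ldR u x = x) ∧ (∀ y : S, ldR (φ u) y = y)

/-- `R` is a subdirect product of 3-primitive left dirings. -/
def SubdirectOfPrim3 (R : Type) [LeftDiring R] : Prop :=
  ∃ (ι : Type) (S : ι → Type) (instS : ∀ i, LeftDiring (S i)),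
    (∀ i, @Prim3 (S i) (instS i)) ∧
    ∃ φ : R → ∀ i, S i,
      Function.Injective φ ∧
      @IsDiringHom R (∀ i, S i) _ (@piLeftDiring ι S instS) φ ∧
      ∀ i, Function.Surjective (fun a => φ a i)


section Aux

variable {R : Type} [LeftDiring R] {M : Type} [AddCommGroup M]

lemma la_zero (mm : DiModule R M) (a : R) : mm.la a 0 = 0 := by
  have h := mm.la_add a 0 0
  rw [add_zero] at h
  exact (right_eq_add.mp (h.trans (add_comm _ _)))

lemma ra_zero (mm : DiModule R M) (a : R) : mm.ra a 0 = 0 := by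
  have h := mm.ra_add a 0 0
  rw [add_zero] at h
  exact (right_eq_add.mp (h.trans (add_comm _ _)))

lemma zero_la (mm : DiModule R M) (x : M) : mm.la 0 x = 0 := by
  have h := mm.add_la 0 0 x
  rw [add_zero] at h
  exact (right_eq_add.mp (h.trans (add_comm _ _)))

lemma zero_ra (mm : DiModule R M) (x : M) : mm.ra 0 x = 0 := by
  have h := mm.add_ra 0 0 x
  rw [add_zero] at h
  exact (right_eq_add.mp (h.trans (add_comm _ _)))

/-- Any left bar-unit acts as identity on the right action. -/
lemma ra_bar (mm : DiModule R M) (d : R) (hd : ∀ y : R, ldR d y = y) (x : M) :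
    mm.ra d x = x := by
  have : mm.ra d (mm.ra ldE x) = mm.ra (ldR d ldE) x := (mm.m5 d ldE x).symm
  rw [mm.m6] at this
  rw [this, hd, mm.m6]

lemma la_ldL_ldE (mm : DiModule R M) (a : R) (x : M) :
    mm.la (ldL a ldE) x = mm.la a x := by
  rw [mm.m2, mm.m6]

/-- The kernel of `la d` for any left bar-unit `d` is the halo. -/
lemma halo_bar (mm : DiModule R M) (d : R) (hd : ∀ y : R, ldR d y = y) :
    {x : M | mm.la d x = 0} = halo mm := by
  ext x
  simp only [Set.mem_setOf_eq, halo]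
  constructor
  · intro h
    have h1 : mm.la (ldL ldE d) x = mm.la ldE x := by
      have e1 : mm.la (ldL ldE d) x = mm.la (ldL ldE d) (mm.ra ldE x) := by rw [mm.m6]
      rw [← mm.m2, ax2, hd, la_ldL_ldE] at e1
      exact e1
    have h2 : mm.la (ldL ldE d) x = mm.la ldE (mm.la d x) := mm.m1 ldE d x
    rw [h, la_zero] at h2
    rw [← h1, h2]
  · intro h
    have : mm.la d x = mm.la (ldL d ldE) x := (la_ldL_ldE mm d x).symm
    rw [this, mm.m1, h, la_zero]

end Aux


section Pullback

variable {R S : Type} [LeftDiring R] [LeftDiring S] {M : Type} [AddCommGroup M]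

/-- Pulling back a module structure along a diring homomorphism whose value on
`ldE` is a left bar-unit of the target. -/
def DiModule.pullback (mm : DiModule S M) (ψ : R → S)
    (hadd : ∀ a b : R, ψ (a + b) = ψ a + ψ b)
    (hL : ∀ a b : R, ψ (ldL a b) = ldL (ψ a) (ψ b))
    (hR : ∀ a b : R, ψ (ldR a b) = ldR (ψ a) (ψ b))
    (hd : ∀ y : S, ldR (ψ ldE) y = y) : DiModule R M where
  la a x := mm.la (ψ a) x
  ra a x := mm.ra (ψ a) x
  la_add a x y := mm.la_add _ x y
  add_la a b x := by simp only [hadd]; exact mm.add_la _ _ x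
  ra_add a x y := mm.ra_add _ x y
  add_ra a b x := by simp only [hadd]; exact mm.add_ra _ _ x
  m1 a b x := by simp only [hL]; exact mm.m1 _ _ x
  m2 a b x := by simp only [hL]; exact mm.m2 _ _ x
  m3 a b x := by simp only [hR]; exact mm.m3 _ _ x
  m4 a b x := by simp only [hL]; exact mm.m4 _ _ x
  m5 a b x := by simp only [hR]; exact mm.m5 _ _ x
  m6 x := ra_bar mm (ψ ldE) hd x

lemma pullback_halo (mm : DiModule S M) (ψ : R → S) (hadd hL hR hd) :
    halo (mm.pullback ψ hadd hL hR hd) = halo mm :=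
  halo_bar mm (ψ ldE) hd

lemma pullback_submodule (mm : DiModule S M) (ψ : R → S) (hadd hL hR hd)
    (hsurj : Function.Surjective ψ) (N : AddSubgroup M) :
    IsSubmodule (mm.pullback ψ hadd hL hR hd) N ↔ IsSubmodule mm N := by
  constructor
  · intro h s x hx
    obtain ⟨r, rfl⟩ := hsurj s
    exact h r x hx
  · intro h r x hx
    exact h (ψ r) x hx

lemma pullback_irr3 (mm : DiModule S M) (ψ : R → S) (hadd hL hR hd)
    (hsurj : Function.Surjective ψ) (h : Irr3 mm) :
    Irr3 (mm.pullback ψ hadd hL hR hd) := by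
  obtain ⟨h1, h2, h3⟩ := h
  refine ⟨by rw [pullback_halo]; exact h1, by rw [pullback_halo]; exact h2, ?_⟩
  intro N hN hN0 hNu
  rw [pullback_halo]
  exact h3 N ((pullback_submodule mm ψ hadd hL hR hd hsurj N).mp hN) hN0 hNu

lemma pullback_memAnn (mm : DiModule S M) (ψ : R → S) (hadd hL hR hd) (a : R) :
    MemAnn (mm.pullback ψ hadd hL hR hd) a ↔ MemAnn mm (ψ a) := Iff.rfl

end Pullback

section Congr

variable {R : Type} [LeftDiring R] {M M' : Type} [AddCommGroup M] [AddCommGroup M']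

lemma irr3_congr (mm : DiModule R M) (mm' : DiModule R M') (e : M ≃+ M')
    (hla : ∀ a x, mm'.la a (e x) = e (mm.la a x))
    (hra : ∀ a x, mm'.ra a (e x) = e (mm.ra a x))
    (h : Irr3 mm) : Irr3 mm' := by
  have himg : ∀ A : Set M, e '' A = {0} ↔ A = {0} := by
    intro A
    rw [show ({0} : Set M') = e '' {0} by rw [Set.image_singleton, map_zero]]
    exact ⟨fun hh => e.injective.image_injective hh, fun hh => by rw [hh]⟩
  have huniv : ∀ A : Set M, e '' A = Set.univ ↔ A = Set.univ := by
    intro A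
    rw [show (Set.univ : Set M') = e '' Set.univ by
      rw [Set.image_univ, e.surjective.range_eq]]
    exact ⟨fun hh => e.injective.image_injective hh, fun hh => by rw [hh]⟩
  have hhalo : halo mm' = e '' halo mm := by
    ext y
    obtain ⟨x, rfl⟩ := e.surjective y
    simp only [halo, Set.mem_setOf_eq, hla]
    rw [show (0 : M') = e 0 by rw [map_zero]]
    rw [Set.mem_image]
    constructor
    · intro hy
      exact ⟨x, e.injective hy, rfl⟩
    · rintro ⟨z, hz, hze⟩
      rw [← e.injective hze, hz]
  obtain ⟨h1, h2, h3⟩ := h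
  refine ⟨?_, ?_, ?_⟩
  · rw [hhalo]; intro hc; exact h1 ((himg _).mp hc)
  · rw [hhalo]; intro hc; exact h2 ((huniv _).mp hc)
  · intro N' hN' hN0 hNu
    set N := N'.comap e.toAddMonoidHom with hNdef
    have hNS : IsSubmodule mm N := by
      intro a x hx
      have hx' : e x ∈ N' := hx
      obtain ⟨c1, c2⟩ := hN' a (e x) hx'
      constructor
      · show e (mm.la a x) ∈ N'
        rw [← hla]; exact c1
      · show e (mm.ra a x) ∈ N'
        rw [← hra]; exact c2
    have hNimg : e '' (N : Set M) = (N' : Set M') := by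
      ext y
      obtain ⟨x, rfl⟩ := e.surjective y
      simp only [Set.mem_image]
      constructor
      · rintro ⟨z, hz, hze⟩
        rw [← e.injective hze]; exact hz
      · intro hy
        exact ⟨x, hy, rfl⟩
    have hN0' : (N : Set M) ≠ {0} := fun hc => hN0 (by rw [← hNimg, hc, Set.image_singleton, map_zero])
    have hNu' : (N : Set M) ≠ Set.univ := fun hc => hNu (by
      rw [← hNimg, hc, Set.image_univ, e.surjective.range_eq])
    have := h3 N hNS hN0' hNu'
    rw [hhalo, ← hNimg, this]

end Congr


section Quot

variable {R : Type} [LeftDiring R] {M : Type} [AddCommGroup M]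

lemma sub_la (mm : DiModule R M) (a b : R) (x : M) :
    mm.la (a - b) x = mm.la a x - mm.la b x := by
  have h := mm.add_la (a - b) b x
  rw [sub_add_cancel] at h
  rw [eq_sub_iff_add_eq, ← h]

lemma sub_ra (mm : DiModule R M) (a b : R) (x : M) :
    mm.ra (a - b) x = mm.ra a x - mm.ra b x := by
  have h := mm.add_ra (a - b) b x
  rw [sub_add_cancel] at h
  rw [eq_sub_iff_add_eq, ← h]

lemma ldL_sub {a b b' : R} : ldL a (b - b') = ldL a b - ldL a b' := by
  have h := dist1 a (b - b') b'
  rw [sub_add_cancel] at h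
  rw [eq_sub_iff_add_eq, ← h]

lemma sub_ldL {a a' b : R} : ldL (a - a') b = ldL a b - ldL a' b := by
  have h := dist2 (a - a') a' b
  rw [sub_add_cancel] at h
  rw [eq_sub_iff_add_eq, ← h]

lemma ldR_sub {a b b' : R} : ldR a (b - b') = ldR a b - ldR a b' := by
  have h := dist3 a (b - b') b'
  rw [sub_add_cancel] at h
  rw [eq_sub_iff_add_eq, ← h]

lemma sub_ldR {a a' b : R} : ldR (a - a') b = ldR a b - ldR a' b := by
  have h := dist4 (a - a') a' b
  rw [sub_add_cancel] at h
  rw [eq_sub_iff_add_eq, ← h]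

/-- The annihilator as an additive subgroup. -/
def annSub (mm : DiModule R M) : AddSubgroup R where
  carrier := {a | MemAnn mm a}
  zero_mem' := fun x => ⟨zero_la mm x, zero_ra mm x⟩
  add_mem' := by
    intro a b ha hb x
    exact ⟨by rw [mm.add_la, (ha x).1, (hb x).1, add_zero],
           by rw [mm.add_ra, (ha x).2, (hb x).2, add_zero]⟩
  neg_mem' := by
    intro a ha x
    constructor
    · have := mm.add_la a (-a) x
      rw [add_neg_cancel, zero_la, (ha x).1, zero_add] at this
      exact this.symm
    · have := mm.add_ra a (-a) x
      rw [add_neg_cancel, zero_ra, (ha x).2, zero_add] at this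
      exact this.symm

lemma ann_ldL_left (mm : DiModule R M) {a : R} (ha : MemAnn mm a) (b : R) :
    MemAnn mm (ldL a b) := fun x =>
  ⟨by rw [mm.m1, (ha _).1], by rw [mm.m4, (ha _).2]⟩

lemma ann_ldL_right (mm : DiModule R M) {a : R} (ha : MemAnn mm a) (b : R) :
    MemAnn mm (ldL b a) := fun x =>
  ⟨by rw [mm.m1, (ha _).1, la_zero], by rw [mm.m4, (ha _).2, ra_zero]⟩

lemma ann_ldR_left (mm : DiModule R M) {a : R} (ha : MemAnn mm a) (b : R) :
    MemAnn mm (ldR a b) := fun x =>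
  ⟨by rw [mm.m3, (ha _).2], by rw [mm.m5, (ha _).2]⟩

lemma ann_ldR_right (mm : DiModule R M) {a : R} (ha : MemAnn mm a) (b : R) :
    MemAnn mm (ldR b a) := fun x =>
  ⟨by rw [mm.m3, (ha _).1, ra_zero], by rw [mm.m5, (ha _).2, ra_zero]⟩

/-- The quotient of `R` by the annihilator of a module. -/
abbrev QuotD (mm : DiModule R M) : Type := R ⧸ annSub mm

def qmk (mm : DiModule R M) : R → QuotD mm := QuotientAddGroup.mk

lemma qmk_rel {mm : DiModule R M} {a b : R} (h : a - b ∈ annSub mm) :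
    qmk mm a = qmk mm b :=
  (QuotientAddGroup.eq_iff_sub_mem).mpr h

lemma qmk_surjective (mm : DiModule R M) : Function.Surjective (qmk mm) :=
  fun x => Quotient.inductionOn x (fun a => ⟨a, rfl⟩)

def quotLdL (mm : DiModule R M) : QuotD mm → QuotD mm → QuotD mm :=
  fun x y => Quotient.liftOn₂ x y (fun a b => qmk mm (ldL a b)) (by
    intro a b a' b' h1 h2
    replace h1 : -a + a' ∈ annSub mm := QuotientAddGroup.leftRel_apply.mp h1
    replace h2 : -b + b' ∈ annSub mm := QuotientAddGroup.leftRel_apply.mp h2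
    apply qmk_rel
    have key : ldL a b - ldL a' b' = ldL a (b - b') + ldL (a - a') b' := by
      rw [ldL_sub, sub_ldL]; abel
    rw [key]
    have hb : (b - b') ∈ annSub mm := by
      have := (annSub mm).neg_mem h2
      rwa [neg_add_rev, neg_neg, neg_add_eq_sub] at this
    have ha : (a - a') ∈ annSub mm := by
      have := (annSub mm).neg_mem h1
      rwa [neg_add_rev, neg_neg, neg_add_eq_sub] at this
    exact (annSub mm).add_mem (ann_ldL_right mm hb a) (ann_ldL_left mm ha b'))

def quotLdR (mm : DiModule R M) : QuotD mm → QuotD mm → QuotD mm :=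
  fun x y => Quotient.liftOn₂ x y (fun a b => qmk mm (ldR a b)) (by
    intro a b a' b' h1 h2
    replace h1 : -a + a' ∈ annSub mm := QuotientAddGroup.leftRel_apply.mp h1
    replace h2 : -b + b' ∈ annSub mm := QuotientAddGroup.leftRel_apply.mp h2
    apply qmk_rel
    have key : ldR a b - ldR a' b' = ldR a (b - b') + ldR (a - a') b' := by
      rw [ldR_sub, sub_ldR]; abel
    rw [key]
    have hb : (b - b') ∈ annSub mm := by
      have := (annSub mm).neg_mem h2
      rwa [neg_add_rev, neg_neg, neg_add_eq_sub] at this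
    have ha : (a - a') ∈ annSub mm := by
      have := (annSub mm).neg_mem h1
      rwa [neg_add_rev, neg_neg, neg_add_eq_sub] at this
    exact (annSub mm).add_mem (ann_ldR_right mm hb a) (ann_ldR_left mm ha b'))

lemma quotLdL_mk (mm : DiModule R M) (a b : R) :
    quotLdL mm (qmk mm a) (qmk mm b) = qmk mm (ldL a b) := rfl

lemma quotLdR_mk (mm : DiModule R M) (a b : R) :
    quotLdR mm (qmk mm a) (qmk mm b) = qmk mm (ldR a b) := rfl

lemma qmk_add (mm : DiModule R M) (a b : R) :
    qmk mm (a + b) = qmk mm a + qmk mm b := rfl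

/-- The quotient left diring. -/
instance quotDiring (mm : DiModule R M) : LeftDiring (QuotD mm) :=
  { (inferInstance : AddCommGroup (QuotD mm)) with
    ldL := quotLdL mm
    ldR := quotLdR mm
    ldE := qmk mm ldE
    ax1 := fun x y z => Quotient.inductionOn₃ x y z (fun a b c =>
      congrArg (qmk mm) (ax1 a b c))
    ax2 := fun x y z => Quotient.inductionOn₃ x y z (fun a b c =>
      congrArg (qmk mm) (ax2 a b c))
    ax3 := fun x y z => Quotient.inductionOn₃ x y z (fun a b c =>
      congrArg (qmk mm) (ax3 a b c))
    ax4 := fun x y z => Quotient.inductionOn₃ x y z (fun a b c =>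
      congrArg (qmk mm) (ax4 a b c))
    ax5 := fun x y z => Quotient.inductionOn₃ x y z (fun a b c =>
      congrArg (qmk mm) (ax5 a b c))
    ax6 := fun x => Quotient.inductionOn x (fun a => congrArg (qmk mm) (ax6 a))
    dist1 := fun x y z => Quotient.inductionOn₃ x y z (fun a b c =>
      congrArg (qmk mm) (dist1 a b c))
    dist2 := fun x y z => Quotient.inductionOn₃ x y z (fun a b c =>
      congrArg (qmk mm) (dist2 a b c))
    dist3 := fun x y z => Quotient.inductionOn₃ x y z (fun a b c =>
      congrArg (qmk mm) (dist3 a b c))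
    dist4 := fun x y z => Quotient.inductionOn₃ x y z (fun a b c =>
      congrArg (qmk mm) (dist4 a b c)) }

/-- The module structure on `M` over the quotient diring. -/
def quotModule (mm : DiModule R M) : DiModule (QuotD mm) M where
  la s x := Quotient.liftOn s (fun a => mm.la a x) (by
    intro a a' h
    replace h : -a + a' ∈ annSub mm := QuotientAddGroup.leftRel_apply.mp h
    have ha : (a' - a) ∈ annSub mm := by rwa [sub_eq_neg_add]
    have := (ha x).1
    rw [sub_la] at this
    linear_combination (norm := abel) -this)
  ra s x := Quotient.liftOn s (fun a => mm.ra a x) (by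
    intro a a' h
    replace h : -a + a' ∈ annSub mm := QuotientAddGroup.leftRel_apply.mp h
    have ha : (a' - a) ∈ annSub mm := by rwa [sub_eq_neg_add]
    have := (ha x).2
    rw [sub_ra] at this
    linear_combination (norm := abel) -this)
  la_add s x y := Quotient.inductionOn s (fun a => mm.la_add a x y)
  add_la s t x := Quotient.inductionOn₂ s t (fun a b => mm.add_la a b x)
  ra_add s x y := Quotient.inductionOn s (fun a => mm.ra_add a x y)
  add_ra s t x := Quotient.inductionOn₂ s t (fun a b => mm.add_ra a b x)
  m1 s t x := Quotient.inductionOn₂ s t (fun a b => mm.m1 a b x)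
  m2 s t x := Quotient.inductionOn₂ s t (fun a b => mm.m2 a b x)
  m3 s t x := Quotient.inductionOn₂ s t (fun a b => mm.m3 a b x)
  m4 s t x := Quotient.inductionOn₂ s t (fun a b => mm.m4 a b x)
  m5 s t x := Quotient.inductionOn₂ s t (fun a b => mm.m5 a b x)
  m6 x := mm.m6 x

lemma quotModule_la_mk (mm : DiModule R M) (a : R) (x : M) :
    (quotModule mm).la (qmk mm a) x = mm.la a x := rfl

lemma quotModule_ra_mk (mm : DiModule R M) (a : R) (x : M) :
    (quotModule mm).ra (qmk mm a) x = mm.ra a x := rfl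

lemma quotModule_halo (mm : DiModule R M) :
    halo (quotModule mm) = halo mm := rfl

lemma quotModule_submodule (mm : DiModule R M) (N : AddSubgroup M) :
    IsSubmodule (quotModule mm) N ↔ IsSubmodule mm N := by
  constructor
  · intro h a x hx
    exact h (qmk mm a) x hx
  · intro h s x hx
    exact Quotient.inductionOn s (fun a => h a x hx)

lemma quotModule_irr3 (mm : DiModule R M) (h : Irr3 mm) :
    Irr3 (quotModule mm) := by
  obtain ⟨h1, h2, h3⟩ := h
  refine ⟨by rw [quotModule_halo]; exact h1, by rw [quotModule_halo]; exact h2, ?_⟩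
  intro N hN hN0 hNu
  rw [quotModule_halo]
  exact h3 N ((quotModule_submodule mm N).mp hN) hN0 hNu

lemma quotModule_faithful (mm : DiModule R M) :
    FaithfulAnn (quotModule mm) := by
  intro s hs
  induction s using Quotient.inductionOn with
  | h a =>
    have : MemAnn mm a := fun x => hs x
    exact (QuotientAddGroup.eq_zero_iff a).mpr this

lemma quot_prim3 (mm : DiModule R M) (h : Irr3 mm) :
    Prim3 (QuotD mm) :=
  ⟨M, _, quotModule mm, quotModule_irr3 mm h, quotModule_faithful mm⟩

end Quot


section Sum

open DirectSum

variable {R : Type} [LeftDiring R] {ι : Type} [DecidableEq ι]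
  {Mf : ι → Type} [∀ i, AddCommGroup (Mf i)]

/-- The direct sum of a family of modules. -/
def sumModule (mmf : ∀ i, DiModule R (Mf i)) : DiModule R (⨁ i, Mf i) where
  la a f := DFinsupp.mapRange (fun i => (mmf i).la a) (fun i => la_zero (mmf i) a) f
  ra a f := DFinsupp.mapRange (fun i => (mmf i).ra a) (fun i => ra_zero (mmf i) a) f
  la_add a x y := DFinsupp.mapRange_add _ _ (fun i => (mmf i).la_add a) x y
  add_la a b x := by
    apply DFinsupp.ext; intro i
    simp only [DFinsupp.mapRange_apply, DFinsupp.add_apply]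
    exact (mmf i).add_la a b (x i)
  ra_add a x y := DFinsupp.mapRange_add _ _ (fun i => (mmf i).ra_add a) x y
  add_ra a b x := by
    apply DFinsupp.ext; intro i
    simp only [DFinsupp.mapRange_apply, DFinsupp.add_apply]
    exact (mmf i).add_ra a b (x i)
  m1 a b x := by
    apply DFinsupp.ext; intro i; simp only [DFinsupp.mapRange_apply]; exact (mmf i).m1 a b (x i)
  m2 a b x := by
    apply DFinsupp.ext; intro i; simp only [DFinsupp.mapRange_apply]; exact (mmf i).m2 a b (x i)
  m3 a b x := by
    apply DFinsupp.ext; intro i; simp only [DFinsupp.mapRange_apply]; exact (mmf i).m3 a b (x i)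
  m4 a b x := by
    apply DFinsupp.ext; intro i; simp only [DFinsupp.mapRange_apply]; exact (mmf i).m4 a b (x i)
  m5 a b x := by
    apply DFinsupp.ext; intro i; simp only [DFinsupp.mapRange_apply]; exact (mmf i).m5 a b (x i)
  m6 x := by
    apply DFinsupp.ext; intro i; simp only [DFinsupp.mapRange_apply]; exact (mmf i).m6 (x i)

/-- The `i`-th component as an additive subgroup of the direct sum. -/
def sumN (i : ι) : AddSubgroup (⨁ i, Mf i) := (DirectSum.of Mf i).range

lemma sumModule_la_of (mmf : ∀ i, DiModule R (Mf i)) (a : R) (i : ι) (y : Mf i) :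
    (sumModule mmf).la a (DirectSum.of Mf i y) = DirectSum.of Mf i ((mmf i).la a y) := by
  show DFinsupp.mapRange (fun i => (mmf i).la a) (fun i => la_zero (mmf i) a)
      (DFinsupp.single i y) = DFinsupp.single i ((mmf i).la a y)
  exact DFinsupp.mapRange_single

lemma sumModule_ra_of (mmf : ∀ i, DiModule R (Mf i)) (a : R) (i : ι) (y : Mf i) :
    (sumModule mmf).ra a (DirectSum.of Mf i y) = DirectSum.of Mf i ((mmf i).ra a y) := by
  show DFinsupp.mapRange (fun i => (mmf i).ra a) (fun i => ra_zero (mmf i) a)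
      (DFinsupp.single i y) = DFinsupp.single i ((mmf i).ra a y)
  exact DFinsupp.mapRange_single

lemma sumN_submodule (mmf : ∀ i, DiModule R (Mf i)) (i : ι) :
    IsSubmodule (sumModule mmf) (sumN i) := by
  rintro a f ⟨y, rfl⟩
  exact ⟨⟨(mmf i).la a y, (sumModule_la_of mmf a i y).symm⟩,
         ⟨(mmf i).ra a y, (sumModule_ra_of mmf a i y).symm⟩⟩

/-- The equivalence between `Mf i` and the `i`-th component subgroup. -/
def compEquiv (i : ι) : Mf i ≃+ (sumN (Mf := Mf) i) where
  toFun y := ⟨DirectSum.of Mf i y, ⟨y, rfl⟩⟩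
  invFun z := z.1 i
  left_inv y := DirectSum.of_eq_same i y
  right_inv z := by
    obtain ⟨y, hy⟩ := z.2
    apply Subtype.ext
    show DirectSum.of Mf i (z.1 i) = z.1
    rw [← hy, DirectSum.of_eq_same]
  map_add' x y := Subtype.ext (map_add (DirectSum.of Mf i) x y)

lemma sumN_internal (mmf : ∀ i, DiModule R (Mf i)) :
    DirectSum.IsInternal (sumN (Mf := Mf)) := by
  classical
  set E := DFinsupp.mapRange.addEquiv (fun i => compEquiv (Mf := Mf) i) with hE
  have hcomp : (DirectSum.coeAddMonoidHom (sumN (Mf := Mf))).comp E.toAddMonoidHom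
      = AddMonoidHom.id _ := by
    apply DirectSum.addHom_ext
    intro i y
    show (DirectSum.coeAddMonoidHom (sumN (Mf := Mf))) (E ((DirectSum.of Mf i) y))
        = (DirectSum.of Mf i) y
    have h1 : E (DirectSum.of Mf i y) = DirectSum.of _ i (compEquiv (Mf := Mf) i y) := by
      show DFinsupp.mapRange (fun i => (compEquiv (Mf := Mf) i : Mf i → sumN i))
          (fun i => map_zero _) (DFinsupp.single i y)
          = DFinsupp.single i (compEquiv (Mf := Mf) i y)
      exact DFinsupp.mapRange_single
    rw [h1, DirectSum.coeAddMonoidHom_of]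
    rfl
  have hfun : ∀ z, DirectSum.coeAddMonoidHom (sumN (Mf := Mf)) z = E.symm z := by
    intro z
    conv_lhs => rw [← E.apply_symm_apply z]
    exact DFunLike.congr_fun hcomp (E.symm z)
  show Function.Bijective _
  rw [show ⇑(DirectSum.coeAddMonoidHom (sumN (Mf := Mf))) = ⇑E.symm from funext hfun]
  exact E.symm.bijective

lemma sumN_irr3 (mmf : ∀ i, DiModule R (Mf i)) (i : ι) (h : Irr3 (mmf i)) :
    Irr3 ((sumModule mmf).restrict (sumN i) (sumN_submodule mmf i)) := by
  apply irr3_congr (mmf i) _ (compEquiv (Mf := Mf) i) _ _ h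
  · intro a x
    exact Subtype.ext (sumModule_la_of mmf a i x)
  · intro a x
    exact Subtype.ext (sumModule_ra_of mmf a i x)

end Sum

/-- The two external characterizations of 3-semi-primitivity: `R` is
3-semi-primitive iff it has a faithful completely 3-reducible left module,
iff it is a subdirect product of 3-primitive left dirings. -/
theorem stmt18 {R : Type} [LeftDiring R] :
    (SemiPrim3 R ↔
      ∃ (M : Type) (g : AddCommGroup M) (mm : @DiModule R _ M g),
        @FaithfulAnn R _ M g mm ∧ @CompRed3 R _ M g mm) ∧
    (SemiPrim3 R ↔ SubdirectOfPrim3 R) := by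
  classical
  have imp1 : SemiPrim3 R →
      ∃ (M : Type) (g : AddCommGroup M) (mm : @DiModule R _ M g),
        @FaithfulAnn R _ M g mm ∧ @CompRed3 R _ M g mm := by
    intro hsp
    choose Mf gf mmf hirr hann using fun i : {a : R // a ≠ 0} => hsp i.1 i.2
    letI : ∀ i, AddCommGroup (Mf i) := gf
    letI : DecidableEq {a : R // a ≠ 0} := fun a b => Classical.propDecidable (a = b)
    refine ⟨DirectSum {a : R // a ≠ 0} Mf, inferInstance, sumModule mmf, ?_, ?_⟩
    · intro a ha
      by_contra hne
      apply hann ⟨a, hne⟩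
      intro x
      constructor
      · have h1 := (ha (DirectSum.of Mf ⟨a, hne⟩ x)).1
        rw [sumModule_la_of] at h1
        have h2 := congrArg (fun f => f ⟨a, hne⟩) h1
        simpa [DirectSum.of_eq_same] using h2
      · have h1 := (ha (DirectSum.of Mf ⟨a, hne⟩ x)).2
        rw [sumModule_ra_of] at h1
        have h2 := congrArg (fun f => f ⟨a, hne⟩) h1
        simpa [DirectSum.of_eq_same] using h2
    · refine ⟨{a : R // a ≠ 0}, sumN, sumN_submodule mmf, ?_,
        fun i => sumN_irr3 mmf i (hirr i)⟩
      exact sumN_internal mmf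
  have imp2 : (∃ (M : Type) (g : AddCommGroup M) (mm : @DiModule R _ M g),
      @FaithfulAnn R _ M g mm ∧ @CompRed3 R _ M g mm) → SemiPrim3 R := by
    rintro ⟨M, g, mm, hfaith, ι, N, hN, hint, hirr⟩ a ha
    suffices h : ∃ i, ¬ MemAnn (mm.restrict (N i) (hN i)) a by
      obtain ⟨i, hi⟩ := h
      exact ⟨N i, inferInstance, mm.restrict (N i) (hN i), hirr i, hi⟩
    by_contra hc
    push_neg at hc
    apply ha
    apply hfaith
    have key : ∀ (F : M →+ M), (∀ (i : ι) (y : N i), F y = 0) → ∀ x, F x = 0 := by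
      intro F h0 x
      obtain ⟨f, rfl⟩ := hint.surjective x
      have hcmp : F.comp (DirectSum.coeAddMonoidHom N) = 0 := by
        apply DirectSum.addHom_ext
        intro i y
        simp only [AddMonoidHom.comp_apply, DirectSum.coeAddMonoidHom_of,
          AddMonoidHom.zero_apply]
        exact h0 i y
      exact DFunLike.congr_fun hcmp f
    intro x
    constructor
    · refine key (AddMonoidHom.mk' (mm.la a) (mm.la_add a)) ?_ x
      intro i y
      exact congrArg Subtype.val ((hc i y).1)
    · refine key (AddMonoidHom.mk' (mm.ra a) (mm.ra_add a)) ?_ x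
      intro i y
      exact congrArg Subtype.val ((hc i y).2)
  have imp3 : SemiPrim3 R → SubdirectOfPrim3 R := by
    intro hsp
    choose Mf gf mmf hirr hann using fun i : {a : R // a ≠ 0} => hsp i.1 i.2
    letI : ∀ i, AddCommGroup (Mf i) := gf
    refine ⟨{a : R // a ≠ 0}, fun i => QuotD (mmf i), fun i => quotDiring (mmf i),
      fun i => quot_prim3 (mmf i) (hirr i), fun a i => qmk (mmf i) a, ?_, ?_, ?_⟩
    · intro a b hab
      by_contra hne
      have hc : a - b ≠ 0 := sub_ne_zero.mpr hne
      have h1 := congrFun hab ⟨a - b, hc⟩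
      have h2 : a - b ∈ annSub (mmf ⟨a - b, hc⟩) :=
        QuotientAddGroup.eq_iff_sub_mem.mp h1
      exact hann ⟨a - b, hc⟩ h2
    · refine ⟨fun a b => funext fun i => rfl, fun a b => funext fun i => rfl,
        fun a b => funext fun i => rfl, ldE, ax6, fun y => funext fun i => ?_⟩
      show quotLdR (mmf i) (qmk (mmf i) ldE) (y i) = y i
      exact Quotient.inductionOn (y i) (fun z => congrArg (qmk (mmf i)) (ax6 z))
    · exact fun i => qmk_surjective (mmf i)
  have imp4 : SubdirectOfPrim3 R → SemiPrim3 R := by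
    rintro ⟨ι, S, instS, hprim, φ, hinj, ⟨hadd, hL, hR, u, hu1, hu2⟩, hsurj⟩ a ha
    have hφ0 : φ 0 = 0 := by
      have h := hadd 0 0
      rw [add_zero] at h
      exact (left_eq_add.mp h)
    have hφa : φ a ≠ 0 := fun h => ha (hinj (h.trans hφ0.symm))
    have hex : ∃ i, φ a i ≠ 0 := by
      by_contra hc
      push_neg at hc
      exact hφa (funext hc)
    obtain ⟨i, hi⟩ := hex
    letI := instS i
    obtain ⟨M, g, mm, hirr, hfaith⟩ := hprim i
    letI := g
    set ψ : R → S i := fun r => φ r i with hψ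
    have hψadd : ∀ a b : R, ψ (a + b) = ψ a + ψ b := fun a b => congrFun (hadd a b) i
    have hψL : ∀ a b : R, ψ (ldL a b) = ldL (ψ a) (ψ b) := fun a b => congrFun (hL a b) i
    have hψR : ∀ a b : R, ψ (ldR a b) = ldR (ψ a) (ψ b) := fun a b => congrFun (hR a b) i
    have hψsurj : Function.Surjective ψ := hsurj i
    have hd : ∀ y : S i, ldR (ψ ldE) y = y := by
      intro y
      obtain ⟨z, rfl⟩ := hψsurj y
      rw [← hψR]
      exact congrArg ψ (ax6 z)
    refine ⟨M, g, mm.pullback ψ hψadd hψL hψR hd,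
      pullback_irr3 mm ψ hψadd hψL hψR hd hψsurj hirr, ?_⟩
    intro hmem
    have : MemAnn mm (ψ a) := (pullback_memAnn mm ψ hψadd hψL hψR hd a).mp hmem
    exact hi (hfaith (ψ a) this)
  exact ⟨⟨imp1, imp2⟩, ⟨imp3, fun h => imp2 (imp1 (imp4 h))⟩⟩
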